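/- arXiv:0707.4449 — 6 statements merged into one kernel-verified Lean document; each statement's English description precedes it below -/
import Mathlib

section
/- Let A be a semi-local Noetherian commutative ring. If every minimal prime ideal of A is contained in a unique maximal ideal, then A is isomorphic (as a ring) to a finite product of local rings. -/
/-!
Every prime of `A` lies over a minimal prime, so the hypothesis forces every prime to lie in a
unique maximal ideal. Hence `Spec A` is partitioned by the sets `{x | x ≤ m}`, `m` maximal.
Each of them is the finite union of the `V(p)` with `p` minimal and `p ≤ m`, so it is closed,
and a finite partition into closed sets is a partition into clopen sets. A clopen partition of
`Spec A` is cut out by complete orthogonal idempotents `e_m`, so `A ≅ ∏ A ⧸ (1 - e_m)`, and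
the only maximal ideal containing `1 - e_m` is `m`.
-/

universe u

open Function PrimeSpectrum

theorem isClopen_of_isClosed_of_pairwise_disjoint_cover {X ι : Type*} [TopologicalSpace X]
    [Finite ι] {s : ι → Set X} (hclosed : ∀ i, IsClosed (s i))
    (hdisj : Pairwise (Disjoint on s)) (hcover : ⋃ i, s i = Set.univ) (i : ι) :
    IsClopen (s i) := by
  refine ⟨hclosed i, ?_⟩
  have hcompl : (s i)ᶜ = ⋃ j ∈ {j | j ≠ i}, s j := by
    ext x
    obtain ⟨k, hk⟩ := Set.mem_iUnion.mp (hcover.symm ▸ Set.mem_univ x)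
    simp only [Set.mem_compl_iff, Set.mem_iUnion, Set.mem_ofPred_eq, exists_prop]
    refine ⟨fun hx => ⟨k, fun hki => hx (hki ▸ hk), hk⟩, ?_⟩
    rintro ⟨j, hji, hj⟩ hx
    exact Set.disjoint_left.mp (hdisj hji) hj hx
  rw [← isClosed_compl_iff, hcompl]
  exact (Set.toFinite _).isClosed_biUnion fun j _ => hclosed j

section

variable {R : Type u} [CommRing R]

theorem PrimeSpectrum.exists_completeOrthogonalIdempotents_basicOpen_eq {ι : Type*}
    [Fintype ι] {s : ι → Set (PrimeSpectrum R)} (hs : ∀ i, IsClopen (s i))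
    (hdisj : Pairwise (Disjoint on s)) (hcover : ⋃ i, s i = Set.univ) :
    ∃ e : ι → R, CompleteOrthogonalIdempotents e ∧
      ∀ i, (basicOpen (e i) : Set (PrimeSpectrum R)) = s i := by
  choose e he hes using fun i => exists_idempotent_basicOpen_eq_of_isClopen (hs i)
  have ortho : OrthogonalIdempotents e := by
    refine ⟨he, fun i j hij => ((he i).mul (he j)).eq_zero_of_isNilpotent ?_⟩
    rw [← basicOpen_eq_bot_iff, basicOpen_mul, ← SetLike.coe_set_eq,
      TopologicalSpace.Opens.coe_inf, ← hes, ← hes]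
    exact (hdisj hij).inter_eq
  refine ⟨e, .of_prod_one_sub ortho ?_, fun i => (hes i).symm⟩
  rw [ortho.prod_one_sub]
  refine ortho.isIdempotentElem_sum.one_sub.eq_zero_of_isNilpotent
    (nilpotent_iff_mem_prime.mpr fun p hp => ?_)
  rw [← ortho.prod_one_sub]
  obtain ⟨i, hi⟩ :=
    Set.mem_iUnion.mp (hcover.symm ▸ Set.mem_univ (⟨p, hp⟩ : PrimeSpectrum R))
  have hei : e i ∉ p := by rwa [hes] at hi
  refine hp.prod_mem_iff.mpr ⟨i, Finset.mem_univ i, (hp.mem_or_mem ?_).resolve_left hei⟩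
  simp [mul_sub, (he i).eq]

theorem Ideal.Quotient.isLocalRing_of_existsUnique_isMaximal_le {I : Ideal R}
    (h : ∃! m : Ideal R, m.IsMaximal ∧ I ≤ m) : IsLocalRing (R ⧸ I) := by
  obtain ⟨m, ⟨hm, hIm⟩, huniq⟩ := h
  have : Nontrivial (R ⧸ I) :=
    Ideal.Quotient.nontrivial_iff.mpr (ne_top_of_le_ne_top hm.ne_top hIm)
  have hcomap (J : Ideal (R ⧸ I)) (hJ : J.IsMaximal) : J.comap (Ideal.Quotient.mk I) = m :=
    huniq _ ⟨Ideal.comap_isMaximal_of_surjective _ Ideal.Quotient.mk_surjective,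
      Ideal.mk_ker.symm.trans_le (Ideal.ker_le_comap _)⟩
  obtain ⟨J, hJ⟩ := Ideal.exists_maximal (R ⧸ I)
  exact .of_unique_max_ideal ⟨J, hJ, fun J' hJ' => Ideal.comap_injective_of_surjective _
    Ideal.Quotient.mk_surjective ((hcomap J' hJ').trans (hcomap J hJ).symm)⟩

theorem PrimeSpectrum.exists_ringEquiv_pi_isLocalRing {ι : Type*} [Finite ι]
    {s : ι → Set (PrimeSpectrum R)} (hs : ∀ i, IsClopen (s i))
    (hdisj : Pairwise (Disjoint on s)) (hcover : ⋃ i, s i = Set.univ) {m : ι → Ideal R}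
    (hm : ∀ i, (m i).IsMaximal)
    (hmax : ∀ i (x : PrimeSpectrum R), x.asIdeal.IsMaximal → (x ∈ s i ↔ x.asIdeal = m i)) :
    ∃ (S : ι → Type u) (_ : ∀ i, CommRing (S i)), (∀ i, IsLocalRing (S i)) ∧
      Nonempty (R ≃+* ∀ i, S i) := by
  have := Fintype.ofFinite ι
  obtain ⟨e, he, hes⟩ := exists_completeOrthogonalIdempotents_basicOpen_eq hs hdisj hcover
  refine ⟨fun i => R ⧸ Ideal.span {1 - e i}, fun i => inferInstance, fun i => ?_,
    ⟨RingEquiv.ofBijective _ he.bijective_pi⟩⟩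
  have hle_iff (x : PrimeSpectrum R) : Ideal.span {1 - e i} ≤ x.asIdeal ↔ x ∈ s i := by
    rw [← hes, basicOpen_eq_zeroLocus_of_isIdempotentElem _ (he.idem i), mem_zeroLocus,
      Set.singleton_subset_iff, Ideal.span_singleton_le_iff_mem]
    rfl
  exact Ideal.Quotient.isLocalRing_of_existsUnique_isMaximal_le ⟨m i,
    ⟨hm i, (hle_iff ⟨m i, (hm i).isPrime⟩).mpr ((hmax i _ (hm i)).mpr rfl)⟩,
    fun y ⟨hy, hle⟩ => (hmax i ⟨y, hy.isPrime⟩ hy).mp ((hle_iff _).mp hle)⟩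

theorem existsUnique_isMaximal_le_of_isPrime
    (h : ∀ p ∈ minimalPrimes R, ∃! m : Ideal R, m.IsMaximal ∧ p ≤ m) {q : Ideal R}
    (hq : q.IsPrime) : ∃! m : Ideal R, m.IsMaximal ∧ q ≤ m := by
  obtain ⟨p, hp, hpq⟩ := Ideal.exists_minimalPrimes_le (bot_le : ⊥ ≤ q)
  obtain ⟨m, hm, hqm⟩ := Ideal.exists_le_maximal q hq.ne_top
  exact ⟨m, ⟨hm, hqm⟩,
    fun m' hm' => (h p hp).unique ⟨hm'.1, hpq.trans hm'.2⟩ ⟨hm, hpq.trans hqm⟩⟩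

theorem PrimeSpectrum.isClosed_setOf_asIdeal_le (hfin : (minimalPrimes R).Finite)
    (h : ∀ p ∈ minimalPrimes R, ∃! m : Ideal R, m.IsMaximal ∧ p ≤ m) {m : Ideal R}
    (hm : m.IsMaximal) : IsClosed {x : PrimeSpectrum R | x.asIdeal ≤ m} := by
  have hunion : {x : PrimeSpectrum R | x.asIdeal ≤ m} =
      ⋃ p ∈ {p ∈ minimalPrimes R | p ≤ m}, zeroLocus (p : Set R) := by
    ext x
    simp only [Set.mem_ofPred_eq, Set.mem_iUnion, mem_zeroLocus, SetLike.coe_subset_coe,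
      exists_prop]
    constructor
    · intro hxm
      obtain ⟨p, hp, hpx⟩ := Ideal.exists_minimalPrimes_le (bot_le : ⊥ ≤ x.asIdeal)
      exact ⟨p, ⟨hp, hpx.trans hxm⟩, hpx⟩
    · rintro ⟨p, ⟨hp, hpm⟩, hpx⟩
      obtain ⟨m', hm', hxm'⟩ := Ideal.exists_le_maximal _ x.isPrime.ne_top
      rwa [(h p hp).unique ⟨hm, hpm⟩ ⟨hm', hpx.trans hxm'⟩]
  rw [hunion]
  exact (hfin.subset fun p hp => hp.1).isClosed_biUnion fun p _ => isClosed_zeroLocus _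

end

theorem exists_ringEquiv_pi_fin_of_ringEquiv_pi {A ι : Type*} [CommRing A] [Finite ι]
    (S : ι → Type u) [∀ i, CommRing (S i)] [∀ i, IsLocalRing (S i)]
    (φ : A ≃+* ∀ i, S i) :
    ∃ (n : ℕ) (R : Fin n → Type u) (inst : ∀ i, CommRing (R i)),
      (∀ i, @IsLocalRing (R i) ((inst i).toRing.toSemiring)) ∧
      Nonempty (A ≃+* ∀ i, R i) := by
  obtain ⟨n, ⟨σ⟩⟩ := Finite.exists_equiv_fin ι
  exact ⟨n, fun k => S (σ.symm k), fun k => inferInstance, fun k => inferInstance,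
    ⟨φ.trans (RingEquiv.piCongrLeft' S σ)⟩⟩

/-- A semi-local Noetherian commutative ring in which every minimal prime is
contained in a unique maximal ideal is isomorphic to a finite product of local rings. -/
theorem stmt_0 {A : Type} [CommRing A] [IsNoetherianRing A]
    (hsemilocal : {I : Ideal A | I.IsMaximal}.Finite)
    (h : ∀ p ∈ minimalPrimes A, ∃! m : Ideal A, m.IsMaximal ∧ p ≤ m) :
    ∃ (n : ℕ) (R : Fin n → Type) (inst : ∀ i, CommRing (R i)),
      (∀ i, @IsLocalRing (R i) ((inst i).toRing.toSemiring)) ∧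
      Nonempty (A ≃+* ∀ i, R i) := by
  have : Finite {I : Ideal A | I.IsMaximal} := hsemilocal.to_subtype
  let s (m : {I : Ideal A | I.IsMaximal}) : Set (PrimeSpectrum A) := {x | x.asIdeal ≤ m}
  have hclosed (m) : IsClosed (s m) :=
    isClosed_setOf_asIdeal_le (minimalPrimes.finite_of_isNoetherianRing A) h m.2
  have hdisj : Pairwise (Disjoint on s) := fun m m' hne =>
    Set.disjoint_left.mpr fun x hm hm' => hne <| Subtype.ext <|
      (existsUnique_isMaximal_le_of_isPrime h x.isPrime).unique ⟨m.2, hm⟩ ⟨m'.2, hm'⟩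
  have hcover : ⋃ m, s m = Set.univ := Set.eq_univ_of_forall fun x => by
    obtain ⟨m, hm, hxm⟩ := Ideal.exists_le_maximal _ x.isPrime.ne_top
    exact Set.mem_iUnion.mpr ⟨⟨m, hm⟩, hxm⟩
  obtain ⟨S, _, _, ⟨φ⟩⟩ := exists_ringEquiv_pi_isLocalRing
    (isClopen_of_isClosed_of_pairwise_disjoint_cover hclosed hdisj hcover) hdisj hcover
    (m := Subtype.val) (fun m => m.2)
    fun m x hx => ⟨fun hxm => hx.eq_of_le m.2.ne_top hxm, le_of_eq⟩
  exact exists_ringEquiv_pi_fin_of_ringEquiv_pi S φ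
end

section
/- For an integer t, one has t ≠ 0 if and only if there exist integers w, x, y such that t·w = (1+2x)·(1+3y). -/
lemma four_pow_mod3 (k : ℕ) : ∃ y : ℤ, (4 : ℤ) ^ k = 1 + 3 * y := by
  induction k with
  | zero => exact ⟨0, by ring⟩
  | succ n ih =>
    obtain ⟨y, hy⟩ := ih
    exact ⟨1 + 4 * y, by rw [pow_succ, hy]; ring⟩

/-- An integer `t` is nonzero iff `t·w = (1+2x)(1+3y)` is solvable in integers. -/
theorem stmt_3 (t : ℤ) :
    t ≠ 0 ↔ ∃ w x y : ℤ, t * w = (1 + 2 * x) * (1 + 3 * y) := by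
  constructor
  · intro ht
    obtain ⟨k, m, hm, hkm⟩ := Nat.exists_eq_pow_mul_and_not_dvd
      (Int.natAbs_ne_zero.mpr ht) 2 (by norm_num)
    -- t = ±(2^k * m)
    have hodd : Odd (m : ℤ) := by
      have : Odd m := Nat.odd_iff.mpr (Nat.two_dvd_ne_zero.mp hm)
      exact_mod_cast (Int.odd_coe_nat m).mpr this
    have habs : (t.natAbs : ℤ) = 2 ^ k * m := by exact_mod_cast congrArg (Nat.cast : ℕ → ℤ) hkm
    obtain ⟨y, hy⟩ := four_pow_mod3 k
    rcases Int.natAbs_eq t with h | h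
    · obtain ⟨x, hx⟩ := hodd
      refine ⟨2 ^ k, x, y, ?_⟩
      have : t = 2 ^ k * m := by rw [h, habs]
      rw [this, hx, ← hy]
      rw [show (4:ℤ)^k = 2^k*2^k by rw [show (4:ℤ)=2*2 by norm_num, mul_pow]]
      ring
    · obtain ⟨x, hx⟩ := (hodd.neg)
      refine ⟨2 ^ k, x, y, ?_⟩
      have : t = -(2 ^ k * m) := by rw [h, habs]
      have hx' : (1 : ℤ) + 2 * x = -m := by rw [hx]; ring
      rw [this, hx', ← hy]
      rw [show (4:ℤ)^k = 2^k*2^k by rw [show (4:ℤ)=2*2 by norm_num, mul_pow]]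
      ring
  · rintro ⟨w, x, y, h⟩ ht
    rw [ht, zero_mul] at h
    rcases mul_eq_zero.mp h.symm with h1 | h1
    · exact (by omega : (1 : ℤ) + 2 * x ≠ 0) h1
    · have h2 : y = -1/3 := by omega
      omega
end

section
/- Let A be an integral domain and let p₁, p₂ be prime ideals of A such that the localization A_{p₁} is Noetherian and p₁ ∩ p₂ contains no nonzero prime ideal of A. Then for every t ∈ A: t ≠ 0 if and only if there exist w, x₁, x₂ ∈ A with t·w = x₁·x₂, x₁ ∉ p₁, and x₂ ∉ p₂. -/
/-!
Localize at `p₁`. The radical of `t A_{p₁}` is the intersection of the finitely many minimal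
primes over it. Each of them contracts to a prime of `A` that lies in `p₁` and contains `t ≠ 0`,
so by hypothesis it is not contained in `p₂`; as `p₂` is prime, neither is the contraction of the
radical. An element `x ∉ p₂` of that contraction has a power `x ^ n` in `t A_{p₁}`, i.e.
`s * x ^ n = t * w` for some `s ∉ p₁`.
-/

theorem Ideal.exists_mem_minimalPrimes_comap_le_of_comap_radical_le {R S : Type*} [CommRing R]
    [CommRing S] [IsNoetherianRing S] (f : R →+* S) {I : Ideal S} {P : Ideal R} [hP : P.IsPrime]
    (h : I.radical.comap f ≤ P) : ∃ q ∈ I.minimalPrimes, q.comap f ≤ P := by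
  have hfin := (I.finite_minimalPrimes_of_isNoetherianRing S).image (Ideal.comap f)
  rw [← I.sInf_minimalPrimes, Ideal.comap_sInf', ← sInf_eq_iInf, ← hfin.coe_toFinset,
    ← Finset.inf_id_eq_sInf, hP.inf_le'] at h
  obtain ⟨_, hmem, hle⟩ := h
  obtain ⟨q, hq, rfl⟩ := hfin.mem_toFinset.mp hmem
  exact ⟨q, hq, hle⟩

theorem IsLocalization.AtPrime.comap_not_le_of_algebraMap_mem {A S : Type*} [CommRing A]
    [CommRing S] [Algebra A S] {p₁ p₂ : Ideal A} [p₁.IsPrime] [IsLocalization.AtPrime S p₁]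
    (hmeet : ∀ q : Ideal A, q.IsPrime → q ≤ p₁ ⊓ p₂ → q = ⊥) {t : A} (ht : t ≠ 0)
    (q : Ideal S) [hq : q.IsPrime] (htq : algebraMap A S t ∈ q) :
    ¬ q.comap (algebraMap A S) ≤ p₂ := by
  intro hle
  have hbot := hmeet _ (Ideal.comap_isPrime _ q)
    (le_inf (IsLocalization.AtPrime.orderIsoOfPrime S p₁ ⟨q, hq⟩).2.2 hle)
  exact ht (by simpa [hbot] using Ideal.mem_comap.mpr htq)

/-- Lemma 3.2: in a domain `A` with primes `p₁, p₂` such that `A_{p₁}` is Noetherian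
and `p₁ ∩ p₂` contains no nonzero prime ideal, an element `t` is nonzero iff
`t·w = x₁·x₂` with `x₁ ∉ p₁`, `x₂ ∉ p₂` is solvable. -/
theorem stmt_4 {A : Type} [CommRing A] [IsDomain A]
    (p₁ p₂ : Ideal A) [p₁.IsPrime] [p₂.IsPrime]
    (hnoeth : IsNoetherianRing (Localization.AtPrime p₁))
    (hmeet : ∀ q : Ideal A, q.IsPrime → q ≤ p₁ ⊓ p₂ → q = ⊥)
    (t : A) :
    t ≠ 0 ↔ ∃ w x₁ x₂ : A, t * w = x₁ * x₂ ∧ x₁ ∉ p₁ ∧ x₂ ∉ p₂ := by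
  refine ⟨fun ht ↦ ?_, ?_⟩
  · let f := algebraMap A (Localization.AtPrime p₁)
    let J := (Ideal.span {t}).map f
    have hradical : ¬ J.radical.comap f ≤ p₂ := fun hJ ↦ by
      obtain ⟨q, hq, hle⟩ := Ideal.exists_mem_minimalPrimes_comap_le_of_comap_radical_le f hJ
      have : q.IsPrime := hq.1.1
      exact IsLocalization.AtPrime.comap_not_le_of_algebraMap_mem hmeet ht q
        (hq.1.2 (Ideal.mem_map_of_mem f (Ideal.mem_span_singleton_self t))) hle
    obtain ⟨x, ⟨n, hxn⟩, hx⟩ := SetLike.not_le_iff_exists.mp hradical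
    rw [← map_pow, IsLocalization.algebraMap_mem_map_algebraMap_iff p₁.primeCompl] at hxn
    obtain ⟨s, hs, hsx⟩ := hxn
    obtain ⟨w, hw⟩ := Ideal.mem_span_singleton'.mp hsx
    exact ⟨w, s, x ^ n, by rw [mul_comm, hw], hs,
      fun h ↦ hx (‹p₂.IsPrime›.mem_of_pow_mem n h)⟩
  · rintro ⟨w, x₁, x₂, heq, hx₁, hx₂⟩ rfl
    rw [zero_mul, eq_comm, mul_eq_zero] at heq
    exact heq.elim (fun h ↦ hx₁ (h ▸ p₁.zero_mem)) (fun h ↦ hx₂ (h ▸ p₂.zero_mem))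
end

section
/- Let A be a Noetherian integral domain, F = X² + aX + b ∈ A[X] irreducible over Frac(A), and B = A[X]/(F). Let p be a prime ideal of A with a ∉ p and b ∈ p, and let x denote the class of X in B. Then p₁ = pB + xB and p₂ = pB + (x+a)B are two distinct prime ideals of B lying over p, and B/p₁ ≅ A/p ≅ B/p₂. -/
open Polynomial

/-!
If `r ∈ A` is a root of `F` modulo `p`, then `X ↦ r mod p` defines a surjection `B → A/p`
whose kernel is `pB + (x - r)B`: dividing by `X - r` writes every element of `B` as
`c + (x - r)z` with `c ∈ A`. Both `0` and `-a` are roots of `F` modulo `p`, since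
`F(0) = F(-a) = b`; they give `p₁` and `p₂`, which differ because otherwise
`a = (x + a) - x ∈ p₁ ∩ A = p`.
-/

lemma AdjoinRoot.exists_eq_of_add_root_sub_mul {R : Type*} [CommRing R] (f : R[X]) (r : R)
    (y : AdjoinRoot f) : ∃ c z, y = of f c + (root f - of f r) * z := by
  induction y using AdjoinRoot.induction_on with
  | ih g =>
    refine ⟨g.eval r, mk f (g /ₘ (X - C r)), ?_⟩
    conv_lhs => rw [← modByMonic_add_div g (X - C r), modByMonic_X_sub_C_eq_C_eval]
    simp only [map_add, map_mul, map_sub, mk_C, mk_X]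

lemma ker_eq_map_sup_span_singleton {R S : Type*} [CommRing R] [CommRing S] [Algebra R S]
    {I : Ideal R} (φ : S →+* R ⧸ I) (hφ : φ.comp (algebraMap R S) = Ideal.Quotient.mk I)
    {t : S} (ht : φ t = 0) (hspan : ∀ y, ∃ c z, y = algebraMap R S c + t * z) :
    RingHom.ker φ = I.map (algebraMap R S) ⊔ Ideal.span {t} := by
  have hφc (c : R) : φ (algebraMap R S c) = Ideal.Quotient.mk I c := RingHom.congr_fun hφ c
  apply le_antisymm
  · intro y hy
    obtain ⟨c, z, rfl⟩ := hspan y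
    have hc : c ∈ I := by
      rwa [RingHom.mem_ker, map_add, map_mul, ht, zero_mul, add_zero, hφc,
        Ideal.Quotient.eq_zero_iff_mem] at hy
    exact Ideal.add_mem _ (Ideal.mem_sup_left (Ideal.mem_map_of_mem _ hc))
      (Ideal.mem_sup_right (Ideal.mul_mem_right _ _ (Ideal.mem_span_singleton_self t)))
  · refine sup_le (Ideal.map_le_iff_le_comap.mpr fun c hc => ?_) ?_
    · rwa [Ideal.mem_comap, RingHom.mem_ker, hφc, Ideal.Quotient.eq_zero_iff_mem]
    · rwa [Ideal.span_le, Set.singleton_subset_iff, SetLike.mem_coe, RingHom.mem_ker]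

lemma exists_surjective_ker_eq_map_sup_span_root_sub {R B : Type*} [CommRing R] [CommRing B]
    [Algebra R B] {f : R[X]} (e : AdjoinRoot f ≃ₐ[R] B) {x : B} (hx : x = e (AdjoinRoot.root f))
    (I : Ideal R) {r : R} (hr : f.eval r ∈ I) :
    ∃ φ : B →+* R ⧸ I, Function.Surjective φ ∧ φ.comp (algebraMap R B) = Ideal.Quotient.mk I ∧
      RingHom.ker φ = I.map (algebraMap R B) ⊔ Ideal.span {x - algebraMap R B r} := by
  subst hx
  have hroot : f.eval₂ (Ideal.Quotient.mkₐ R I) (Ideal.Quotient.mk I r) = 0 := by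
    change eval₂ (Ideal.Quotient.mk I) (Ideal.Quotient.mk I r) f = 0
    rwa [eval₂_at_apply, Ideal.Quotient.eq_zero_iff_mem]
  let φ : B →ₐ[R] R ⧸ I :=
    (AdjoinRoot.liftAlgHom f (Ideal.Quotient.mkₐ R I) _ hroot).comp e.symm.toAlgHom
  have hφ : (φ : B →+* R ⧸ I).comp (algebraMap R B) = Ideal.Quotient.mk I :=
    RingHom.ext fun c => by simp [φ]
  refine ⟨φ, fun y => ?_, hφ, ker_eq_map_sup_span_singleton _ hφ ?_ fun y => ?_⟩
  · obtain ⟨c, rfl⟩ := Ideal.Quotient.mk_surjective y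
    exact ⟨algebraMap R B c, RingHom.congr_fun hφ c⟩
  · simp [φ, AdjoinRoot.liftAlgHom_root]
  · obtain ⟨c, z, h⟩ := AdjoinRoot.exists_eq_of_add_root_sub_mul f r (e.symm y)
    refine ⟨c, e z, ?_⟩
    rw [← e.apply_symm_apply y, h, map_add, map_mul, map_sub, ← AdjoinRoot.algebraMap_eq,
      e.commutes, e.commutes]

lemma isPrime_comap_quotient_map_sup_span_root_sub {R B : Type*} [CommRing R] [CommRing B]
    [Algebra R B] {f : R[X]} (e : AdjoinRoot f ≃ₐ[R] B) {x : B} (hx : x = e (AdjoinRoot.root f))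
    (I : Ideal R) [I.IsPrime] {r : R} (hr : f.eval r ∈ I) {q : Ideal B}
    (hq : q = I.map (algebraMap R B) ⊔ Ideal.span {x - algebraMap R B r}) :
    q.IsPrime ∧ q.comap (algebraMap R B) = I ∧ Nonempty ((B ⧸ q) ≃+* R ⧸ I) := by
  obtain ⟨φ, hsurj, hφ, hker⟩ := exists_surjective_ker_eq_map_sup_span_root_sub e hx I hr
  rw [← hker] at hq
  subst hq
  refine ⟨RingHom.ker_isPrime φ, ?_, ⟨RingHom.quotientKerEquivOfSurjective hsurj⟩⟩
  rw [RingHom.comap_ker, hφ, Ideal.mk_ker]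

theorem stmt_11_general {A : Type} [CommRing A]
    (a b : A)
    (p : Ideal A) [p.IsPrime] (ha : a ∉ p) (hb : b ∈ p)
    (B : Type) [CommRing B] [Algebra A B]
    (e : (Polynomial A ⧸ Ideal.span {(X ^ 2 + C a * X + C b : Polynomial A)}) ≃ₐ[A] B)
    (x : B) (hx : x = e (Ideal.Quotient.mk _ X))
    (p₁ p₂ : Ideal B)
    (hp₁ : p₁ = p.map (algebraMap A B) ⊔ Ideal.span {x})
    (hp₂ : p₂ = p.map (algebraMap A B) ⊔ Ideal.span {x + algebraMap A B a}) :
    p₁ ≠ p₂ ∧ p₁.IsPrime ∧ p₂.IsPrime ∧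
    p₁.comap (algebraMap A B) = p ∧ p₂.comap (algebraMap A B) = p ∧
    Nonempty ((B ⧸ p₁) ≃+* A ⧸ p) ∧ Nonempty ((B ⧸ p₂) ≃+* A ⧸ p) := by
  obtain ⟨hprime₁, hcomap₁, hequiv₁⟩ := isPrime_comap_quotient_map_sup_span_root_sub e hx p
    (r := 0) (q := p₁) (by simpa using hb) (by rw [hp₁, map_zero, sub_zero])
  obtain ⟨hprime₂, hcomap₂, hequiv₂⟩ := isPrime_comap_quotient_map_sup_span_root_sub e hx p
    (r := -a) (q := p₂) (by simpa [sq] using hb) (by rw [hp₂, map_neg, sub_neg_eq_add])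
  refine ⟨fun h => ha ?_, hprime₁, hprime₂, hcomap₁, hcomap₂, hequiv₁, hequiv₂⟩
  have hx₁ : x ∈ p₁ := hp₁ ▸ Ideal.mem_sup_right (Ideal.mem_span_singleton_self x)
  have hxa₁ : x + algebraMap A B a ∈ p₁ :=
    h ▸ hp₂ ▸ Ideal.mem_sup_right (Ideal.mem_span_singleton_self _)
  rw [← hcomap₁, Ideal.mem_comap]
  simpa using p₁.sub_mem hxa₁ hx₁

/-- Splitting of a prime `p` in `B = A[X]/(X²+aX+b)` when `a ∉ p`, `b ∈ p` and
`F = X²+aX+b` is irreducible over `Frac(A)`: writing `x` for the class of `X`,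
the ideals `p₁ = pB + xB` and `p₂ = pB + (x+a)B` are two distinct prime ideals of
`B` lying over `p`, and `B/p₁ ≅ A/p ≅ B/p₂`. -/
theorem stmt_11 {A : Type} [CommRing A] [IsNoetherianRing A] [IsDomain A]
    (a b : A)
    (hirr : Irreducible ((X ^ 2 + C a * X + C b : Polynomial A).map
      (algebraMap A (FractionRing A))))
    (p : Ideal A) [p.IsPrime] (ha : a ∉ p) (hb : b ∈ p)
    (B : Type) [CommRing B] [Algebra A B]
    (e : (Polynomial A ⧸ Ideal.span {(X ^ 2 + C a * X + C b : Polynomial A)}) ≃ₐ[A] B)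
    (x : B) (hx : x = e (Ideal.Quotient.mk _ X))
    (p₁ p₂ : Ideal B)
    (hp₁ : p₁ = p.map (algebraMap A B) ⊔ Ideal.span {x})
    (hp₂ : p₂ = p.map (algebraMap A B) ⊔ Ideal.span {x + algebraMap A B a}) :
    p₁ ≠ p₂ ∧ p₁.IsPrime ∧ p₂.IsPrime ∧
    p₁.comap (algebraMap A B) = p ∧ p₂.comap (algebraMap A B) = p ∧
    Nonempty ((B ⧸ p₁) ≃+* A ⧸ p) ∧ Nonempty ((B ⧸ p₂) ≃+* A ⧸ p) :=
  stmt_11_general a b p ha hb B e x hx p₁ p₂ hp₁ hp₂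
end

section
/- Let A be a commutative Noetherian ring and r an ideal of A. Suppose PHI(A, r) holds: for every finite family S of polynomials over A in finitely many variables, if S has a common zero modulo r^q for every q ∈ ℕ, then S has a common zero in A. Then r is contained in the Jacobson radical of A. -/
/-!
If `a ∈ r`, the truncated geometric series `∑_{i<q} (-a)^i` inverts `1 + a` modulo `r^q`, so the
equation `(1 + a) X = 1` is solvable modulo every power of `r`. Under `PHI(A, r)` it is then solvable
in `A`, i.e. `1 + r` consists of units, which characterises ideals inside the Jacobson radical.
-/

/-- The infinitesimal Hasse principle `PHI(A, r)`: every finite polynomial system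
over `A` which is solvable modulo `r^q` for all `q` is solvable in `A`. -/
def PHI {A : Type} [CommRing A] (r : Ideal A) : Prop :=
  ∀ (n s : ℕ) (F : Fin s → MvPolynomial (Fin n) A),
    (∀ q : ℕ, ∃ x : Fin n → A, ∀ j, MvPolynomial.eval x (F j) ∈ r ^ q) →
    ∃ x : Fin n → A, ∀ j, MvPolynomial.eval x (F j) = 0

open MvPolynomial

lemma Ideal.exists_one_add_mul_sub_one_mem_pow {A : Type*} [CommRing A] {r : Ideal A} {a : A}
    (ha : a ∈ r) (q : ℕ) : ∃ x : A, (1 + a) * x - 1 ∈ r ^ q := by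
  refine ⟨∑ i ∈ Finset.range q, (-a) ^ i, ?_⟩
  have hgeom : (1 + a) * ∑ i ∈ Finset.range q, (-a) ^ i - 1 = -(-a) ^ q := by
    linear_combination -geom_sum_mul (-a) q
  rw [hgeom]
  exact (r ^ q).neg_mem (Ideal.pow_mem_pow (r.neg_mem ha) q)

lemma PHI.isUnit_one_add {A : Type} [CommRing A] {r : Ideal A} (h : PHI r) {a : A} (ha : a ∈ r) :
    IsUnit (1 + a) := by
  have heval : ∀ x : Fin 1 → A, eval x (C (1 + a) * X 0 - 1) = (1 + a) * x 0 - 1 := by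
    intro x
    simp only [eval_sub, eval_mul, eval_C, eval_X, map_one]
  obtain ⟨x, hx⟩ := h 1 1 (fun _ => C (1 + a) * X 0 - 1) fun q => by
    obtain ⟨y, hy⟩ := Ideal.exists_one_add_mul_sub_one_mem_pow ha q
    exact ⟨fun _ => y, fun _ => by rwa [heval]⟩
  have hinv := hx 0
  rw [heval, sub_eq_zero] at hinv
  exact IsUnit.of_mul_eq_one _ hinv

theorem stmt_17_general {A : Type} [CommRing A]
    (r : Ideal A) (h : PHI r) :
    r ≤ (⊥ : Ideal A).jacobson := by
  intro t ht
  rw [Ideal.mem_jacobson_bot]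
  intro y
  rw [add_comm]
  exact h.isUnit_one_add (r.mul_mem_right y ht)

/-- If `PHI(A, r)` holds then `r` is contained in the Jacobson radical of `A`. -/
theorem stmt_17 {A : Type} [CommRing A] [IsNoetherianRing A]
    (r : Ideal A) (h : PHI r) :
    r ≤ (⊥ : Ideal A).jacobson :=
  stmt_17_general r h
end

section
/- Let A be a commutative Noetherian ring, r an ideal, and suppose PHI(A, r) holds: for every finite family of polynomials F₁,...,F_s ∈ A[X₁,...,X_r], if the system F_j = 0 has a solution modulo r^q for all q ∈ ℕ then it has a solution in A. Then for any finite family F₁,...,F_s ∈ A[T₁,...,T_n, X₁,...,X_r], the set Z = { t ∈ Aⁿ : ∃ x ∈ A^r, F_j(t,x) = 0 for all j } is closed in the r-adic topology on Aⁿ, i.e., if t ∈ Aⁿ satisfies: for all q ∈ ℕ there exists t' ∈ Z with t - t' ∈ r^q·Aⁿ, then t ∈ Z. -/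
/-- If `PHI(A, r)` holds, then every positive-existential set
`Z = { t : ∃ x, F_j(t, x) = 0 ∀ j }` is closed for the `r`-adic topology on `Aⁿ`. -/
theorem stmt_18 {A : Type} [CommRing A] [IsNoetherianRing A]
    (r : Ideal A) (h : PHI r)
    (n s rr : ℕ) (F : Fin s → MvPolynomial (Fin n ⊕ Fin rr) A)
    (t : Fin n → A)
    (happrox : ∀ q : ℕ, ∃ t' : Fin n → A,
      (∃ x : Fin rr → A, ∀ j, MvPolynomial.eval (Sum.elim t' x) (F j) = 0) ∧
      ∀ i, t i - t' i ∈ r ^ q) :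
    ∃ x : Fin rr → A, ∀ j, MvPolynomial.eval (Sum.elim t x) (F j) = 0 := by
  classical
  -- substitute t into the T-variables
  set G : Fin s → MvPolynomial (Fin rr) A := fun j =>
    MvPolynomial.bind₁ (Sum.elim (fun i => MvPolynomial.C (t i)) MvPolynomial.X) (F j) with hG
  have hGeval : ∀ (x : Fin rr → A) (j : Fin s),
      MvPolynomial.eval x (G j) = MvPolynomial.eval (Sum.elim t x) (F j) := by
    intro x j
    have h1 : MvPolynomial.aeval x (G j) = MvPolynomial.aeval (Sum.elim t x) (F j) := by
      rw [hG, MvPolynomial.aeval_bind₁]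
      have hfun : (fun i => MvPolynomial.aeval x
          (Sum.elim (fun i => MvPolynomial.C (t i)) MvPolynomial.X i)) = Sum.elim t x := by
        funext i; cases i <;> simp
      rw [hfun]
    have e1 : (MvPolynomial.aeval x : _ →ₐ[A] A) (G j) = MvPolynomial.eval x (G j) :=
      DFunLike.congr_fun (MvPolynomial.coe_aeval_eq_eval x) (G j)
    have e2 : (MvPolynomial.aeval (Sum.elim t x) : _ →ₐ[A] A) (F j)
        = MvPolynomial.eval (Sum.elim t x) (F j) :=
      DFunLike.congr_fun (MvPolynomial.coe_aeval_eq_eval (Sum.elim t x)) (F j)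
    rw [← e1, ← e2]
    exact h1
  have key : ∀ q : ℕ, ∃ x : Fin rr → A, ∀ j, MvPolynomial.eval x (G j) ∈ r ^ q := by
    intro q
    obtain ⟨t', ⟨x, hx⟩, ht'⟩ := happrox q
    refine ⟨x, fun j => ?_⟩
    have hq : ∀ i, Ideal.Quotient.mk (r ^ q) (t i) = Ideal.Quotient.mk (r ^ q) (t' i) := by
      intro i
      rw [Ideal.Quotient.mk_eq_mk_iff_sub_mem]
      exact ht' i
    rw [← Ideal.Quotient.eq_zero_iff_mem, hGeval]
    have hmk : ∀ (v : Fin n ⊕ Fin rr → A),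
        Ideal.Quotient.mk (r ^ q) (MvPolynomial.eval v (F j)) =
        MvPolynomial.eval₂Hom (Ideal.Quotient.mk (r ^ q))
          (fun i => Ideal.Quotient.mk (r ^ q) (v i)) (F j) := by
      intro v
      have h0 := MvPolynomial.map_eval₂Hom (RingHom.id A) v (Ideal.Quotient.mk (r ^ q)) (F j)
      rw [RingHom.comp_id] at h0
      exact h0
    have h1 := hmk (Sum.elim t x)
    have h2 := hmk (Sum.elim t' x)
    rw [h1]
    have : (fun i => Ideal.Quotient.mk (r ^ q) (Sum.elim t x i))
        = fun i => Ideal.Quotient.mk (r ^ q) (Sum.elim t' x i) := by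
      funext i; cases i with
      | inl i => simpa using hq i
      | inr i => rfl
    rw [this, ← h2, hx j, map_zero]
  obtain ⟨x, hxG⟩ := h rr s G key
  exact ⟨x, fun j => by rw [← hGeval x j, hxG j]⟩
end
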